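/- Let G = (V, E) be a finite connected simple graph with m edges, and let (G_t)_{t∈ℕ} be a 1-bounded 1-interval connected dynamic graph with footprint G. Then for every start vertex v₀ ∈ V there exists a temporal walk x₀ = v₀, x₁, x₂, … such that every vertex of G appears among x₀, x₁, …, x_{32m²}. (Offline form of the paper's Lemma 1: within the first 8m · 4m = 32m² rounds, one of the two DFS groups visits every node of G.) -/

import Mathlib

/-!
If the set of vertices that a temporal walk from `v` started at round `s` can occupy after `k`
rounds is not all of `V`, the connected snapshot at round `s + k` has an edge leaving it, so
the set grows in the next round. Hence every vertex is reachable within `n - 1` rounds,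
`n = |V|`, and visiting the `n` vertices one after the other takes at most
`n (n - 1) ≤ (m + 1) m ≤ 32 m²` rounds.
-/

open Finset

section

variable {V : Type*}

/-- `x` is a temporal walk in `Gd` whose step `i` happens in round `s + i`. -/
def IsTemporalWalk (Gd : ℕ → SimpleGraph V) (s : ℕ) (x : ℕ → V) : Prop :=
  ∀ i, x (i + 1) = x i ∨ (Gd (s + i)).Adj (x i) (x (i + 1))

lemma IsTemporalWalk.const (Gd : ℕ → SimpleGraph V) (s : ℕ) (v : V) :
    IsTemporalWalk Gd s fun _ => v :=
  fun _ => Or.inl rfl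

def spliceAt (f g : ℕ → V) (k : ℕ) : ℕ → V := fun i => if i < k then f i else g (i - k)

section spliceAt

variable {Gd : ℕ → SimpleGraph V} {s k : ℕ} {f g : ℕ → V}

lemma spliceAt_apply_of_le (hfg : f k = g 0) {i : ℕ} (hi : i ≤ k) : spliceAt f g k i = f i := by
  rcases hi.lt_or_eq with hi | rfl
  · simp [spliceAt, hi]
  · simp [spliceAt, hfg]

@[simp]
lemma spliceAt_apply_add (i : ℕ) : spliceAt f g k (k + i) = g i := by
  simp [spliceAt]

lemma IsTemporalWalk.spliceAt (hf : IsTemporalWalk Gd s f) (hg : IsTemporalWalk Gd (s + k) g)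
    (hfg : f k = g 0) : IsTemporalWalk Gd s (spliceAt f g k) := by
  intro i
  rcases lt_or_ge i k with hi | hi
  · rw [spliceAt_apply_of_le hfg hi.le, spliceAt_apply_of_le hfg hi]
    exact hf i
  · obtain ⟨j, rfl⟩ := Nat.exists_eq_add_of_le hi
    rw [add_assoc k j 1, spliceAt_apply_add, spliceAt_apply_add, ← add_assoc]
    exact hg j

end spliceAt

def temporalReach (Gd : ℕ → SimpleGraph V) (s : ℕ) (v : V) (k : ℕ) : Set V :=
  {w | ∃ x, x 0 = v ∧ IsTemporalWalk Gd s x ∧ x k = w}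

section temporalReach

variable {Gd : ℕ → SimpleGraph V} {s : ℕ} {v : V}

lemma mem_temporalReach_self (k : ℕ) : v ∈ temporalReach Gd s v k :=
  ⟨fun _ => v, rfl, IsTemporalWalk.const Gd s v, rfl⟩

lemma mem_temporalReach_succ {k : ℕ} {w y : V} (hw : w ∈ temporalReach Gd s v k)
    (hy : y = w ∨ (Gd (s + k)).Adj w y) : y ∈ temporalReach Gd s v (k + 1) := by
  obtain ⟨x, hx0, hx, rfl⟩ := hw
  let g : ℕ → V := fun i => if i = 0 then x k else y
  have hg : IsTemporalWalk Gd (s + k) g := by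
    rintro (_ | i)
    · simpa [g, eq_comm] using hy
    · exact Or.inl rfl
  refine ⟨spliceAt x g k, (spliceAt_apply_of_le (f := x) (g := g) rfl k.zero_le).trans hx0,
    hx.spliceAt hg rfl, ?_⟩
  rw [spliceAt_apply_add (i := 1)]
  simp [g]

lemma temporalReach_subset_succ (k : ℕ) :
    temporalReach Gd s v k ⊆ temporalReach Gd s v (k + 1) :=
  fun _ hw => mem_temporalReach_succ hw (Or.inl rfl)

lemma temporalReach_ssubset_succ {k : ℕ} (hconn : (Gd (s + k)).Connected)
    (hne : temporalReach Gd s v k ≠ Set.univ) :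
    temporalReach Gd s v k ⊂ temporalReach Gd s v (k + 1) := by
  obtain ⟨b, hb⟩ := (Set.ne_univ_iff_exists_notMem _).1 hne
  obtain ⟨d, -, hd, hdb⟩ :=
    (hconn.preconnected v b).some.exists_boundary_dart _ (mem_temporalReach_self k) hb
  exact (Set.ssubset_iff_of_subset (temporalReach_subset_succ k)).2
    ⟨d.snd, mem_temporalReach_succ hd (Or.inr d.adj), hdb⟩

lemma temporalReach_eq_univ [Finite V] (hconn : ∀ t, (Gd t).Connected) :
    temporalReach Gd s v (Nat.card V - 1) = Set.univ := by
  have hgrow : ∀ k,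
      temporalReach Gd s v k = Set.univ ∨ k + 1 ≤ (temporalReach Gd s v k).ncard := by
    intro k
    induction k with
    | zero =>
      exact .inr ((Set.ncard_pos).2 ⟨v, mem_temporalReach_self 0⟩)
    | succ k ih =>
      by_cases hk : temporalReach Gd s v k = Set.univ
      · exact .inl (Set.univ_subset_iff.1 (hk ▸ temporalReach_subset_succ k))
      · have ih := ih.resolve_left hk
        have := Set.ncard_lt_ncard (temporalReach_ssubset_succ (hconn (s + k)) hk)
        omega
  by_contra hne
  have hle := (hgrow _).resolve_left hne
  have hlt := Set.ncard_lt_card hne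
  omega

end temporalReach

lemma exists_isTemporalWalk_forall_mem_finset {Gd : ℕ → SimpleGraph V} {k : ℕ}
    (hreach : ∀ s v, temporalReach Gd s v k = Set.univ) (T : Finset V) (s : ℕ) (v : V) :
    ∃ x, x 0 = v ∧ IsTemporalWalk Gd s x ∧ ∀ u ∈ T, ∃ t ≤ #T * k, x t = u := by
  classical
  induction T using Finset.induction_on generalizing s v with
  | empty => exact ⟨fun _ => v, rfl, IsTemporalWalk.const Gd s v, by simp⟩
  | insert a T ha ih =>
    obtain ⟨f, hf0, hf, hfk⟩ : a ∈ temporalReach Gd s v k := hreach s v ▸ Set.mem_univ a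
    obtain ⟨g, hg0, hg, hgT⟩ := ih (s + k) (f k)
    refine ⟨spliceAt f g k, (spliceAt_apply_of_le hg0.symm k.zero_le).trans hf0,
      hf.spliceAt hg hg0.symm, ?_⟩
    rw [card_insert_of_notMem ha]
    intro u hu
    rcases mem_insert.1 hu with rfl | hu
    · exact ⟨k, by nlinarith, (spliceAt_apply_of_le hg0.symm le_rfl).trans hfk⟩
    · obtain ⟨t, ht, rfl⟩ := hgT u hu
      exact ⟨k + t, by linarith, spliceAt_apply_add t⟩

end

theorem temporal_exploration_general {V : Type*} [Fintype V]
    (G : SimpleGraph V) (hG : G.Connected) (m : ℕ) (hm : G.edgeSet.ncard = m)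
    (Gd : ℕ → SimpleGraph V)
    (hconn : ∀ t, (Gd t).Connected)
    (v₀ : V) :
    ∃ x : ℕ → V, x 0 = v₀ ∧
      (∀ t, x (t + 1) = x t ∨ (Gd t).Adj (x t) (x (t + 1))) ∧
      ∀ u : V, ∃ t ≤ 32 * m ^ 2, x t = u := by
  obtain ⟨x, hx0, hx, hvisit⟩ := exists_isTemporalWalk_forall_mem_finset
    (fun s v => temporalReach_eq_univ (s := s) (v := v) hconn) univ 0 v₀
  have hn : Nat.card V ≤ m + 1 := by
    simpa [hm] using hG.card_vert_le_card_edgeSet_add_one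
  refine ⟨x, hx0, by simpa [IsTemporalWalk] using hx, fun u => ?_⟩
  obtain ⟨t, ht, hxt⟩ := hvisit u (mem_univ u)
  refine ⟨t, ht.trans ?_, hxt⟩
  rw [card_univ, ← Nat.card_eq_fintype_card]
  calc Nat.card V * (Nat.card V - 1) ≤ (m + 1) * m := Nat.mul_le_mul hn (by omega)
    _ ≤ 32 * m ^ 2 := by nlinarith

/-- **Offline exploration of a 1-bounded 1-interval connected dynamic graph.**
Let `G` be a finite connected simple graph with `m` edges (the footprint), and let
`Gd t` be the snapshot of a dynamic graph at round `t`, where every snapshot is a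
spanning subgraph of `G`, is connected, and misses at most one edge of `G`.
Then from every start vertex `v₀` there is a temporal walk `x₀ = v₀, x₁, x₂, …`
(at each round either staying put or crossing an edge of the current snapshot)
such that every vertex of `G` appears among `x₀, …, x_{32·m²}`. -/
theorem temporal_exploration {V : Type*} [Fintype V]
    (G : SimpleGraph V) (hG : G.Connected) (m : ℕ) (hm : G.edgeSet.ncard = m)
    (Gd : ℕ → SimpleGraph V)
    (hsub : ∀ t, Gd t ≤ G)
    (hconn : ∀ t, (Gd t).Connected)
    (hbound : ∀ t, (G.edgeSet \ (Gd t).edgeSet).ncard ≤ 1)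
    (v₀ : V) :
    ∃ x : ℕ → V, x 0 = v₀ ∧
      (∀ t, x (t + 1) = x t ∨ (Gd t).Adj (x t) (x (t + 1))) ∧
      ∀ u : V, ∃ t ≤ 32 * m ^ 2, x t = u :=
  temporal_exploration_general G hG m hm Gd hconn v₀
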